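/- Let (X, f) be a dynamical system on a connected compact uniform space. If f is topologically chain transitive, then it is topologically chain mixing. -/

import Mathlib

open Set Filter Function

variable {X : Type*}

/-- An `E`-chain of length `n` from `x` to `y` for the map `f`. -/
def ChainFrom (f : X → X) (E : Set (X × X)) (n : ℕ) (x y : X) : Prop :=
  ∃ c : ℕ → X, c 0 = x ∧ c n = y ∧ ∀ i < n, (f (c i), c (i + 1)) ∈ E

/-- Topological chain transitivity on a uniform space. -/
def ChainTransitive [UniformSpace X] (f : X → X) : Prop :=
  ∀ E ∈ uniformity X, ∀ x y : X, ∃ n ≥ 1, ChainFrom f E n x y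

/-- Lengths of `E`-chains from `x` to itself (loops). -/
def LoopLengths (f : X → X) (E : Set (X × X)) (x : X) : Set ℕ :=
  {n | 1 ≤ n ∧ ChainFrom f E n x x}

/-- `g` is the greatest common divisor of the set `S` of naturals. -/
def IsGcdOfSet (g : ℕ) (S : Set ℕ) : Prop :=
  (∀ n ∈ S, g ∣ n) ∧ ∀ d : ℕ, (∀ n ∈ S, d ∣ n) → d ∣ g

/-- The relation `x ∼_E y`: some `E`-chain from `x` to `y` has length a multiple of `ι`. -/
def SimE (f : X → X) (E : Set (X × X)) (ι : ℕ) (x y : X) : Prop :=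
  ∃ n, ι ∣ n ∧ ChainFrom f E n x y

/-- Topological shadowing property on a uniform space. -/
def Shadowing [UniformSpace X] (f : X → X) : Prop :=
  ∀ E ∈ uniformity X, ∃ D ∈ uniformity X,
    ∀ x : ℕ → X, (∀ i, (f (x i), x (i + 1)) ∈ D) →
      ∃ y, ∀ n, (f^[n] y, x n) ∈ E

/-- Topological chain mixing on a uniform space. -/
def ChainMixing [UniformSpace X] (f : X → X) : Prop :=
  ∀ D ∈ uniformity X, ∀ x y : X, ∃ N ≥ 1, ∀ n ≥ N, ChainFrom f D n x y

/-- A non-wandering point of `f`. -/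
def NonWandering [TopologicalSpace X] (f : X → X) (x : X) : Prop :=
  ∀ V ∈ nhds x, ∃ n ≥ 1, (V ∩ f^[n] ⁻¹' V).Nonempty

/-- Topological transitivity. -/
def TopTransitive [TopologicalSpace X] (f : X → X) : Prop :=
  ∀ U V : Set X, IsOpen U → IsOpen V → U.Nonempty → V.Nonempty →
    ∃ n : ℕ, (U ∩ f^[n] ⁻¹' V).Nonempty

/-- A syndetic set of natural numbers (bounded gaps). -/
def Syndetic (A : Set ℕ) : Prop :=
  ∃ k : ℕ, ∀ n : ℕ, ∃ m, n ≤ m ∧ m ≤ n + k ∧ m ∈ A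

/-- A minimal (almost periodic) point of `f`. -/
def MinimalPt [TopologicalSpace X] (f : X → X) (y : X) : Prop :=
  ∀ V ∈ nhds y, Syndetic {n : ℕ | f^[n] y ∈ V}

/-- Equicontinuity of a dynamical system on a uniform space. -/
def Equicont [UniformSpace X] (f : X → X) : Prop :=
  ∀ E ∈ uniformity X, ∃ D ∈ uniformity X, ∀ n : ℕ, ∀ p ∈ D, (f^[n] p.1, f^[n] p.2) ∈ E

/-!
Fix an open entourage `E` and a point `x`. The lengths of `E`-loops at `x` are closed under
addition, so once their gcd `g` is `1` every large length occurs, and prefixing a loop to a fixed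
chain from `x` to `y` gives chains of all large lengths. Chain transitivity makes the lengths of
all chains from `x` to a point `z` congruent mod `g` (close them up by a chain from `z` back to
`x`), and, `E` being open, points reachable by chains of a given length form open sets. These open
sets, grouped by length mod `g`, split the connected space into disjoint open pieces; as `x` and
`f x` are reached with lengths `0` and `1` mod `g`, this forces `g = 1`.
-/

section Chains

variable {f : X → X} {E : Set (X × X)}

theorem ChainFrom.mono {E' : Set (X × X)} (h : E ⊆ E') {n : ℕ} {x y : X}
    (hc : ChainFrom f E n x y) : ChainFrom f E' n x y := by
  obtain ⟨c, h0, hn, hs⟩ := hc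
  exact ⟨c, h0, hn, fun i hi => h (hs i hi)⟩

theorem chainFrom_zero_iff {x y : X} : ChainFrom f E 0 x y ↔ x = y := by
  constructor
  · rintro ⟨c, rfl, rfl, -⟩
    rfl
  · rintro rfl
    exact ⟨fun _ => x, rfl, rfl, fun i hi => absurd hi i.not_lt_zero⟩

theorem chainFrom_succ_iff {n : ℕ} {x z : X} :
    ChainFrom f E (n + 1) x z ↔ ∃ w, ChainFrom f E n x w ∧ (f w, z) ∈ E := by
  constructor
  · rintro ⟨c, h0, hn, hs⟩
    exact ⟨c n, ⟨c, h0, rfl, fun i hi => hs i (by omega)⟩, hn ▸ hs n n.lt_succ_self⟩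
  · rintro ⟨w, ⟨c, h0, rfl, hs⟩, hw⟩
    refine ⟨update c (n + 1) z, by simp [h0], by simp, fun i hi => ?_⟩
    rcases Nat.lt_succ_iff_lt_or_eq.mp hi with hi | rfl
    · rw [update_of_ne (by omega), update_of_ne (by omega)]
      exact hs i hi
    · simpa using hw

theorem ChainFrom.append {m n : ℕ} {x y z : X} (hxy : ChainFrom f E m x y)
    (hyz : ChainFrom f E n y z) : ChainFrom f E (m + n) x z := by
  induction n generalizing z with
  | zero => rwa [chainFrom_zero_iff.mp hyz] at hxy
  | succ n ih =>
    obtain ⟨w, hyw, hwz⟩ := chainFrom_succ_iff.mp hyz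
    exact chainFrom_succ_iff.mpr ⟨w, ih hyw, hwz⟩

theorem isOpen_setOf_chainFrom [UniformSpace X] (hE : IsOpen E) {n : ℕ} (hn : n ≠ 0) (x : X) :
    IsOpen {z | ChainFrom f E n x z} := by
  obtain ⟨k, rfl⟩ := Nat.exists_eq_succ_of_ne_zero hn
  have hunion :
      {z | ChainFrom f E (k + 1) x z} = ⋃ w ∈ {w | ChainFrom f E k x w}, (f w, ·) ⁻¹' E := by
    ext z
    simp only [mem_ofPred_eq, mem_iUnion, mem_preimage, chainFrom_succ_iff, exists_prop]
  rw [hunion]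
  exact isOpen_biUnion fun w _ => hE.preimage (Continuous.prodMk_right _)

theorem loopLengths_add_mem {x : X} {a b : ℕ} (ha : a ∈ LoopLengths f E x)
    (hb : b ∈ LoopLengths f E x) : a + b ∈ LoopLengths f E x :=
  ⟨le_add_right ha.1, ha.2.append hb.2⟩

theorem ChainTransitive.chainFrom_modEq [UniformSpace X] (ht : ChainTransitive f)
    (hE : E ∈ uniformity X) {m n : ℕ} {x z : X} (hm : ChainFrom f E m x z)
    (hn : ChainFrom f E n x z) : m ≡ n [MOD Nat.setGcd (LoopLengths f E x)] := by
  obtain ⟨l, hl, hzx⟩ := ht E hE z x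
  have loop {k : ℕ} (hk : ChainFrom f E k x z) :
      k + l ≡ 0 [MOD Nat.setGcd (LoopLengths f E x)] :=
    Nat.modEq_zero_iff_dvd.mpr <| Nat.setGcd_dvd_of_mem ⟨by omega, hk.append hzx⟩
  exact Nat.ModEq.add_right_cancel' l ((loop hm).trans (loop hn).symm)

end Chains

theorem PreconnectedSpace.apply_eq_of_iUnion_eq_univ {ι α : Type*} [TopologicalSpace X]
    [PreconnectedSpace X] {U : ι → Set X} (hU : ∀ i, IsOpen (U i))
    (hcover : ⋃ i, U i = univ) (φ : ι → α) (hφ : ∀ i j, (U i ∩ U j).Nonempty → φ i = φ j)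
    {i j : ι} (hi : (U i).Nonempty) (hj : (U j).Nonempty) : φ i = φ j := by
  by_contra hij
  have hsplit : univ ⊆ (⋃ k ∈ {k | φ k = φ i}, U k) ∪ ⋃ k ∈ {k | φ k ≠ φ i}, U k := by
    intro z _
    obtain ⟨k, hz⟩ := mem_iUnion.mp (hcover.symm ▸ mem_univ z : z ∈ ⋃ k, U k)
    by_cases hk : φ k = φ i
    exacts [Or.inl (mem_biUnion hk hz), Or.inr (mem_biUnion hk hz)]
  obtain ⟨z, -, hzA, hzB⟩ := isPreconnected_univ _ _
    (isOpen_biUnion fun k _ => hU k) (isOpen_biUnion fun k _ => hU k) hsplit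
    (hi.mono fun z hz => ⟨mem_univ z, mem_biUnion rfl hz⟩)
    (hj.mono fun z hz => ⟨mem_univ z, mem_biUnion (Ne.symm hij) hz⟩)
  obtain ⟨a, ha, hza⟩ := mem_iUnion₂.mp hzA
  obtain ⟨b, hb, hzb⟩ := mem_iUnion₂.mp hzB
  exact hb ((hφ b a ⟨z, hzb, hza⟩).trans ha)

theorem Nat.exists_forall_ge_mem_of_add_mem {S : Set ℕ} (hS : ∀ a ∈ S, ∀ b ∈ S, a + b ∈ S)
    (hgcd : Nat.setGcd S = 1) : ∃ N, ∀ m ≥ N, m ∈ S := by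
  have hclosure : ∀ m ∈ AddSubmonoid.closure S, m = 0 ∨ m ∈ S := by
    intro m hm
    induction hm using AddSubmonoid.closure_induction with
    | mem m hm => exact Or.inr hm
    | zero => exact Or.inl rfl
    | add a b _ _ ha hb =>
      rcases ha with rfl | ha
      · simpa using hb
      rcases hb with rfl | hb
      · simpa using Or.inr ha
      exact Or.inr (hS a ha b hb)
  obtain ⟨N, hN⟩ := Nat.exists_mem_closure_of_ge S
  refine ⟨N + 1, fun m hm => ?_⟩
  exact (hclosure m (hN m (by omega) (hgcd ▸ one_dvd m))).resolve_left (by omega)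

theorem ChainTransitive.setGcd_loopLengths_eq_one [UniformSpace X] [PreconnectedSpace X]
    {f : X → X} (ht : ChainTransitive f) {E : Set (X × X)} (hE : E ∈ uniformity X)
    (hEo : IsOpen E) (x : X) : Nat.setGcd (LoopLengths f E x) = 1 := by
  set g := Nat.setGcd (LoopLengths f E x)
  let U : ℕ+ → Set X := fun n => {z | ChainFrom f E n x z}
  have hcover : ⋃ n, U n = univ := eq_univ_of_forall fun z => by
    obtain ⟨n, hn, hxz⟩ := ht E hE x z
    exact mem_iUnion.mpr ⟨(⟨n, hn⟩ : ℕ+), hxz⟩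
  obtain ⟨l, hl, hloop⟩ := ht E hE x x
  have hlL : l ∈ LoopLengths f E x := ⟨hl, hloop⟩
  have hstep : ChainFrom f E 1 x (f x) :=
    chainFrom_succ_iff.mpr ⟨x, chainFrom_zero_iff.mpr rfl, refl_mem_uniformity hE⟩
  have h1l : (1 : ℕ) % g = l % g :=
    PreconnectedSpace.apply_eq_of_iUnion_eq_univ (U := U)
      (fun n => isOpen_setOf_chainFrom hEo n.ne_zero x) hcover (fun n => (n : ℕ) % g)
      (fun _ _ ⟨z, hzi, hzj⟩ => ht.chainFrom_modEq hE hzi hzj) (i := 1) (j := ⟨l, hl⟩)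
      ⟨f x, hstep⟩ ⟨x, hloop⟩
  rw [Nat.mod_eq_zero_of_dvd (Nat.setGcd_dvd_of_mem hlL)] at h1l
  exact Nat.dvd_one.mp (Nat.dvd_of_mod_eq_zero h1l)

theorem chain_transitive_imp_chain_mixing_of_connected_general [UniformSpace X]
    [ConnectedSpace X]
    (f : X → X) (ht : ChainTransitive f) :
    ChainMixing f := by
  intro D hD x y
  obtain ⟨E, ⟨hE, hEo⟩, hED⟩ := uniformity_hasBasis_open.mem_iff.mp hD
  obtain ⟨N, hN⟩ := Nat.exists_forall_ge_mem_of_add_mem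
    (fun _ ha _ hb => loopLengths_add_mem ha hb) (ht.setGcd_loopLengths_eq_one hE hEo x)
  obtain ⟨m, -, hxy⟩ := ht E hE x y
  refine ⟨N + m + 1, by omega, fun n hn => ?_⟩
  have hchain := (hN (n - m) (by omega)).2.append hxy
  rw [Nat.sub_add_cancel (by omega)] at hchain
  exact hchain.mono hED

theorem chain_transitive_imp_chain_mixing_of_connected [UniformSpace X]
    [CompactSpace X] [ConnectedSpace X]
    (f : X → X) (hf : UniformContinuous f) (ht : ChainTransitive f) :
    ChainMixing f :=
  chain_transitive_imp_chain_mixing_of_connected_general f ht
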